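/- arXiv:1303.4243 — 3 statements merged into one kernel-verified Lean document; each statement's English description precedes it below -/
import Mathlib

section
/- Let N, d ≥ 1, let X = Fin N × Fin d, and let ι : FreeLieAlgebra ℝ X → FreeAlgebra ℝ X be the unique Lie algebra morphism into the free associative algebra equipped with the commutator bracket ⁅u,v⁆ = u·v − v·u which sends each generator of the free Lie algebra to the corresponding generator of the free algebra. Then the set 𝔨 := {a ∈ FreeLieAlgebra ℝ X : coeff_w(ι(a)) = 0 for every block word w} is a Lie ideal of FreeLieAlgebra ℝ X: it is a linear subspace and ⁅a, b⁆ ∈ 𝔨 whenever a ∈ 𝔨 and b ∈ FreeLieAlgebra ℝ X. -/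
/-!
The coefficient of a word `w` in `u * v` only involves the coefficients of `u` and `v` at factors
of `w`. Hence, for a set `S` of words closed under taking factors, the elements of the free algebra
whose coefficients vanish on `S` form a Lie ideal (indeed a two-sided ideal). The words whose
letters all lie in one block form such a set: the block words and the empty word, and `ι a` has no
constant term. The required Lie ideal is the preimage of this one under `ι`.
-/

/-- The coefficient of the word `w` in an element of the free algebra, with respect to the
basis of `FreeAlgebra ℝ X` indexed by `FreeMonoid X`. -/
noncomputable def FreeAlgebra.coeffWord {X : Type} (a : FreeAlgebra ℝ X) (w : FreeMonoid X) : ℝ :=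
  (FreeAlgebra.basisFreeMonoid ℝ X).repr a w

/-- A word is a block word if it is nonempty and all of its letters have the same
block index (first component). -/
def IsBlockWord {N d : ℕ} (w : FreeMonoid (Fin N × Fin d)) : Prop :=
  w ≠ 1 ∧ ∃ m : Fin N, ∀ l ∈ FreeMonoid.toList w, l.1 = m

attribute [local instance 100] LieRing.ofAssociativeRing

namespace MonoidAlgebra

variable {R M : Type*} [Semiring R] [Monoid M] {S : Set M}

theorem coeff_mul_eq_zero_of_left (hS : ∀ u v, u * v ∈ S → u ∈ S) {x : R[M]}
    (hx : ∀ m ∈ S, x.coeff m = 0) (y : R[M]) {m : M} (hm : m ∈ S) : (x * y).coeff m = 0 := by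
  classical
  rw [coeff_mul]
  refine Finset.sum_eq_zero fun u _ => Finset.sum_eq_zero fun v _ => ite_eq_right_iff.2 ?_
  rintro rfl
  rw [hx u (hS u v hm), zero_mul]

theorem coeff_mul_eq_zero_of_right (hS : ∀ u v, u * v ∈ S → v ∈ S) {y : R[M]}
    (hy : ∀ m ∈ S, y.coeff m = 0) (x : R[M]) {m : M} (hm : m ∈ S) : (x * y).coeff m = 0 := by
  classical
  rw [coeff_mul]
  refine Finset.sum_eq_zero fun u _ => Finset.sum_eq_zero fun v _ => ite_eq_right_iff.2 ?_
  rintro rfl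
  rw [hy v (hS u v hm), mul_zero]

end MonoidAlgebra

namespace FreeAlgebra

theorem algebraMapInv_lieHom_apply {R X : Type*} [CommRing R]
    (f : FreeLieAlgebra R X →ₗ⁅R⁆ FreeAlgebra R X) (hf : ∀ x, f (FreeLieAlgebra.of R x) = ι R x)
    (a : FreeLieAlgebra R X) : algebraMapInv (f a) = 0 := by
  have hcomp : (algebraMapInv : FreeAlgebra R X →ₐ[R] R).toLieHom.comp f = 0 :=
    FreeLieAlgebra.hom_ext fun x => by simp [hf, algebraMapInv]
  exact LieHom.congr_fun hcomp a

variable {X : Type}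

theorem coeffWord_eq_coeff (a : FreeAlgebra ℝ X) (w : FreeMonoid X) :
    a.coeffWord w = (equivMonoidAlgebraFreeMonoid a).coeff w := by
  simp [coeffWord, basisFreeMonoid]

theorem coeffWord_one (a : FreeAlgebra ℝ X) : a.coeffWord 1 = algebraMapInv a := by
  induction a using FreeAlgebra.induction with
  | grade0 r => simp [coeffWord_eq_coeff, equivMonoidAlgebraFreeMonoid]
  | grade1 x => simp [coeffWord_eq_coeff, equivMonoidAlgebraFreeMonoid, algebraMapInv]
  | mul a b ha hb =>
    rw [coeffWord_eq_coeff, map_mul, MonoidAlgebra.coeff_mul_antidiag _ _ _ {(1, 1)}]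
    · simp [← coeffWord_eq_coeff, ha, hb]
    · simp [Prod.ext_iff]
  | add a b ha hb =>
    rw [coeffWord_eq_coeff] at ha hb ⊢
    simp [ha, hb]

def coeffVanishingLieIdeal (S : Set (FreeMonoid X)) (hS : ∀ u v, u * v ∈ S → u ∈ S ∧ v ∈ S) :
    LieIdeal ℝ (FreeAlgebra ℝ X) where
  carrier := {a | ∀ w ∈ S, a.coeffWord w = 0}
  add_mem' ha hb w hw := by
    simp only [Set.mem_ofPred_eq, coeffWord] at *
    simp [ha w hw, hb w hw]
  zero_mem' _ _ := by simp [coeffWord]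
  smul_mem' c a ha w hw := by
    simp only [Set.mem_ofPred_eq, coeffWord] at *
    simp [ha w hw]
  lie_mem {x a} ha w hw := by
    simp only [coeffWord_eq_coeff] at ha ⊢
    rw [Ring.lie_def, map_sub, map_mul, map_mul, MonoidAlgebra.coeff_sub, Finsupp.sub_apply,
      MonoidAlgebra.coeff_mul_eq_zero_of_right (fun u v h => (hS u v h).2) ha _ hw,
      MonoidAlgebra.coeff_mul_eq_zero_of_left (fun u v h => (hS u v h).1) ha _ hw, sub_zero]

theorem mem_coeffVanishingLieIdeal {S : Set (FreeMonoid X)}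
    {hS : ∀ u v, u * v ∈ S → u ∈ S ∧ v ∈ S} {a : FreeAlgebra ℝ X} :
    a ∈ coeffVanishingLieIdeal S hS ↔ ∀ w ∈ S, a.coeffWord w = 0 := Iff.rfl

end FreeAlgebra

namespace FreeMonoid

variable {X B : Type*}

def monochromaticWords (f : X → B) : Set (FreeMonoid X) := {w | ∃ b, ∀ l ∈ w.toList, f l = b}

theorem mem_monochromaticWords_of_mul {f : X → B} {u v : FreeMonoid X}
    (h : u * v ∈ monochromaticWords f) :
    u ∈ monochromaticWords f ∧ v ∈ monochromaticWords f := by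
  obtain ⟨b, hb⟩ := h
  simp only [toList_mul, List.mem_append] at hb
  exact ⟨⟨b, fun l hl => hb l (.inl hl)⟩, ⟨b, fun l hl => hb l (.inr hl)⟩⟩

end FreeMonoid

open FreeAlgebra FreeMonoid in
theorem blockWord_vanishing_is_lie_ideal_general (N d : ℕ)
    (ι : FreeLieAlgebra ℝ (Fin N × Fin d) →ₗ⁅ℝ⁆ FreeAlgebra ℝ (Fin N × Fin d))
    (hι : ∀ x : Fin N × Fin d, ι (FreeLieAlgebra.of ℝ x) = FreeAlgebra.ι ℝ x) :
    ∃ I : LieIdeal ℝ (FreeLieAlgebra ℝ (Fin N × Fin d)),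
      ∀ a : FreeLieAlgebra ℝ (Fin N × Fin d),
        a ∈ I ↔ ∀ w : FreeMonoid (Fin N × Fin d), IsBlockWord w →
          FreeAlgebra.coeffWord (ι a) w = 0 := by
  refine ⟨(coeffVanishingLieIdeal (monochromaticWords Prod.fst)
    fun _ _ => mem_monochromaticWords_of_mul).comap ι, fun a => ?_⟩
  rw [LieIdeal.mem_comap, mem_coeffVanishingLieIdeal]
  refine ⟨fun h w hw => h w hw.2, fun h w hw => ?_⟩
  by_cases hw1 : w = 1
  · rw [hw1, coeffWord_one, algebraMapInv_lieHom_apply ι hι]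
  · exact h w ⟨hw1, hw⟩

theorem blockWord_vanishing_is_lie_ideal (N d : ℕ) (hN : 1 ≤ N) (hd : 1 ≤ d)
    (ι : FreeLieAlgebra ℝ (Fin N × Fin d) →ₗ⁅ℝ⁆ FreeAlgebra ℝ (Fin N × Fin d))
    (hι : ∀ x : Fin N × Fin d, ι (FreeLieAlgebra.of ℝ x) = FreeAlgebra.ι ℝ x) :
    ∃ I : LieIdeal ℝ (FreeLieAlgebra ℝ (Fin N × Fin d)),
      ∀ a : FreeLieAlgebra ℝ (Fin N × Fin d),
        a ∈ I ↔ ∀ w : FreeMonoid (Fin N × Fin d), IsBlockWord w →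
          FreeAlgebra.coeffWord (ι a) w = 0 :=
  blockWord_vanishing_is_lie_ideal_general N d ι hι
end

section
/- Let p ≥ 1 and α > 0, let (E,d) be a metric space and let x : [0,T] → E be a continuous path with ν_p(x; 0,T) < ∞; set ω_x(s,t) := ν_p(x; s,t). Then ω_x(0,T) ≤ 2^{p−1} · α · max{1, α^{−p} · M_{α,[0,T]}(ω_x)^p}, with the convention that the right-hand side is +∞ when M_{α,[0,T]}(ω_x) = ∞. -/
/-!
Write `ω(s, t)` for the `p`-variation of `x` on `[s, t]`. It is superadditive, and Minkowski's
inequality makes `ω ^ (1 / p)` subadditive, so the power-mean inequality gives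
`ω(0, T) ≤ N ^ (p - 1) * ∑ ω(σₖ, σₖ₊₁)` for any partition `σ` of `[0, T]` into `N` pieces.
Since `x` is continuous and `ω(0, T) < ∞`, `ω(s, ·)` is continuous from the right and lower
semicontinuous from the left, so `[0, T]` can be cut greedily into pieces with `ω = α`, except the
last one with `ω ≤ α`. This partition is admissible for `M = M_{α,[0,T]}(ω)`, so `∑ ω(σₖ, σₖ₊₁) ≤ M`
and `(N - 1) α ≤ M`; hence `N = 1` or `N ≤ 2 M / α`.
-/

open scoped ENNReal

/-- The `p`-variation functional of a path `x` on the interval `[s, t]`: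
the supremum over all partitions `s = u₀ < u₁ < … < u_n = t` of
`∑ d(x_{u_{i-1}}, x_{u_i})^p`, valued in `[0, ∞]`. -/
noncomputable def pVar {E : Type*} [PseudoMetricSpace E] (p : ℝ) (x : ℝ → E) (s t : ℝ) : ℝ≥0∞ :=
  ⨆ (n : ℕ) (u : Fin (n + 1) → ℝ) (_ : StrictMono u) (_ : u 0 = s)
    (_ : u (Fin.last n) = t),
    ∑ i : Fin n, edist (x (u i.castSucc)) (x (u i.succ)) ^ p

/-- The accumulated `α`-local `ω`-variation on `[0, T]`: the supremum over all partitions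
`0 = t₀ < t₁ < … < t_n = T` with `ω (t_{i-1}, t_i) ≤ α` for every `i` of
`∑ ω (t_{i-1}, t_i)`. -/
noncomputable def accumLocalVar (ω : ℝ → ℝ → ℝ≥0∞) (α : ℝ≥0∞) (T : ℝ) : ℝ≥0∞ :=
  ⨆ (n : ℕ) (u : Fin (n + 1) → ℝ) (_ : StrictMono u) (_ : u 0 = 0)
    (_ : u (Fin.last n) = T) (_ : ∀ i : Fin n, ω (u i.castSucc) (u i.succ) ≤ α),
    ∑ i : Fin n, ω (u i.castSucc) (u i.succ)

open scoped Classical in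
/-- The greedy subdivision points: `σ₀ = 0` and
`σ_{i+1} = inf {t ∈ (σ_i, T] : ω (σ_i, t) ≥ α}`, with `σ_{i+1} = T` if no such `t` exists. -/
noncomputable def greedyPoints (ω : ℝ → ℝ → ℝ≥0∞) (α : ℝ≥0∞) (T : ℝ) : ℕ → ℝ
  | 0 => 0
  | n + 1 =>
    if ∃ t ∈ Set.Ioc (greedyPoints ω α T n) T, α ≤ ω (greedyPoints ω α T n) t then
      sInf {t | t ∈ Set.Ioc (greedyPoints ω α T n) T ∧ α ≤ ω (greedyPoints ω α T n) t}
    else T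

open Set Filter Finset
open scoped Topology

section Variation

variable {E : Type*} [PseudoMetricSpace E] {p : ℝ} {x : ℝ → E} {s s' m t t' : ℝ}

variable (p x) in
noncomputable def pSum (n : ℕ) (u : ℕ → ℝ) : ℝ≥0∞ :=
  ∑ i ∈ range n, edist (x (u i)) (x (u (i + 1))) ^ p

lemma monotoneOn_Iic_of_le_succ {β : Type*} [Preorder β] {u : ℕ → β} {n : ℕ}
    (hu : ∀ i < n, u i ≤ u (i + 1)) : MonotoneOn u (Set.Iic n) :=
  monotoneOn_of_le_succ ordConnected_Iic fun i _ _ hi =>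
    hu i (by simpa [Order.succ_eq_add_one] using hi)

/-- Indexed by `ℕ`: the values of `u` beyond `n` play no role. -/
structure IntervalPartition (s t : ℝ) where
  n : ℕ
  u : ℕ → ℝ
  lt_succ : ∀ i < n, u i < u (i + 1)
  u_zero : u 0 = s
  u_n : u n = t

namespace IntervalPartition

def single (h : s < t) : IntervalPartition s t where
  n := 1
  u i := if i = 0 then s else t
  lt_succ i hi := by
    obtain rfl : i = 0 := by omega
    simpa using h
  u_zero := rfl
  u_n := rfl

def append (P : IntervalPartition s m) (Q : IntervalPartition m t) : IntervalPartition s t where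
  n := P.n + Q.n
  u i := if i ≤ P.n then P.u i else Q.u (i - P.n)
  lt_succ i hi := by
    rcases lt_or_ge i P.n with hiP | hiP
    · simpa [hiP.le, Nat.succ_le_of_lt hiP] using P.lt_succ i hiP
    · obtain ⟨k, rfl⟩ := Nat.exists_eq_add_of_le hiP
      have hk := Q.lt_succ k (by omega)
      rcases k.eq_zero_or_pos with rfl | hk0
      · simpa [P.u_n, Q.u_zero] using hk
      · simpa [show ¬ P.n + k ≤ P.n by omega, show ¬ P.n + k + 1 ≤ P.n by omega,
          show P.n + k + 1 - P.n = k + 1 by omega] using hk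
  u_zero := by simp [P.u_zero]
  u_n := by
    rcases Q.n.eq_zero_or_pos with h | h
    · simp [h, P.u_n, ← Q.u_n, Q.u_zero]
    · simp [show ¬ P.n + Q.n ≤ P.n by omega, Q.u_n]

lemma append_u_add (P : IntervalPartition s m) (Q : IntervalPartition m t) (k : ℕ) :
    (P.append Q).u (P.n + k) = Q.u k := by
  rcases k.eq_zero_or_pos with rfl | hk
  · simp [append, P.u_n, Q.u_zero]
  · simp [append, show ¬ P.n + k ≤ P.n by omega]

lemma pSum_append (P : IntervalPartition s m) (Q : IntervalPartition m t) :
    pSum p x (P.append Q).n (P.append Q).u = pSum p x P.n P.u + pSum p x Q.n Q.u := by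
  rw [pSum, show (P.append Q).n = P.n + Q.n from rfl, sum_range_add]
  congr 1
  · refine sum_congr rfl fun i hi => ?_
    have hi : i < P.n := mem_range.1 hi
    simp [append, hi.le, Nat.succ_le_of_lt hi]
  · refine sum_congr rfl fun k _ => ?_
    rw [append_u_add, add_assoc, append_u_add]

lemma nonempty (h : s ≤ t) : Nonempty (IntervalPartition s t) := by
  rcases h.eq_or_lt with rfl | h
  · exact ⟨⟨0, fun _ => s, by simp, rfl, rfl⟩⟩
  · exact ⟨single h⟩

lemma strictMono_fin (P : IntervalPartition s t) :
    StrictMono fun i : Fin (P.n + 1) => P.u i :=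
  Fin.strictMono_iff_lt_succ.2 fun i => P.lt_succ i i.isLt

end IntervalPartition

variable (p x) in
lemma pVar_eq_iSup (s t : ℝ) :
    pVar p x s t = ⨆ P : IntervalPartition s t, pSum p x P.n P.u := by
  refine le_antisymm (iSup_le fun n => iSup_le fun v => iSup_le fun hv => iSup_le fun h0 =>
    iSup_le fun hn => ?_) (iSup_le fun P => ?_)
  · have hclamp : ∀ i (hi : i ≤ n), Fin.clamp i n = ⟨i, Nat.lt_succ_of_le hi⟩ :=
      fun i hi => Fin.ext (by simp [Fin.coe_clamp, hi])
    let P : IntervalPartition s t :=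
      { n := n
        u := fun i => v (Fin.clamp i n)
        lt_succ := fun i hi => by
          simp only [hclamp i hi.le, hclamp (i + 1) hi]
          exact hv (Fin.lt_def.2 (Nat.lt_succ_self i))
        u_zero := by simpa [hclamp 0 (Nat.zero_le n)] using h0
        u_n := by rw [hclamp n le_rfl]; exact hn }
    refine le_iSup_of_le P (le_of_eq ?_)
    rw [pSum, ← Fin.sum_univ_eq_sum_range (fun i => edist (x (P.u i)) (x (P.u (i + 1))) ^ p)]
    refine Fintype.sum_congr _ _ fun i => ?_
    simp only [P, hclamp i i.isLt.le, hclamp (i + 1) i.isLt]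
    rfl
  · rw [pSum, ← Fin.sum_univ_eq_sum_range (fun i => edist (x (P.u i)) (x (P.u (i + 1))) ^ p)]
    exact le_iSup_of_le P.n <| le_iSup_of_le (fun i : Fin (P.n + 1) => P.u i) <|
      le_iSup_of_le P.strictMono_fin <| le_iSup_of_le P.u_zero <| le_iSup_of_le P.u_n le_rfl

lemma IntervalPartition.pSum_le_pVar (P : IntervalPartition s t) :
    pSum p x P.n P.u ≤ pVar p x s t :=
  (pVar_eq_iSup p x s t).symm ▸ le_iSup (fun P : IntervalPartition s t => pSum p x P.n P.u) P

lemma exists_lt_pSum_of_lt_pVar {C : ℝ≥0∞} (h : C < pVar p x s t) :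
    ∃ P : IntervalPartition s t, C < pSum p x P.n P.u :=
  lt_iSup_iff.1 (pVar_eq_iSup p x s t ▸ h)

lemma lt_of_lt_pVar {C : ℝ≥0∞} (h : C < pVar p x s t) : s < t := by
  obtain ⟨P, hP⟩ := exists_lt_pSum_of_lt_pVar h
  have hn : 0 < P.n := Nat.pos_of_ne_zero fun h0 => by simp [pSum, h0] at hP
  simpa [P.u_zero, P.u_n] using
    P.strictMono_fin (a := 0) (b := Fin.last P.n) (by simp [Fin.lt_def, hn])

@[simp]
lemma pVar_self (s : ℝ) : pVar p x s s = 0 :=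
  le_zero_iff.1 (not_lt.1 fun h => (lt_of_lt_pVar h).false)

lemma pVar_add_pVar_le (hsm : s ≤ m) (hmt : m ≤ t) :
    pVar p x s m + pVar p x m t ≤ pVar p x s t := by
  have := IntervalPartition.nonempty hsm
  have := IntervalPartition.nonempty hmt
  rw [pVar_eq_iSup p x s m, pVar_eq_iSup p x m t]
  refine ENNReal.iSup_add_iSup_le fun P Q => ?_
  rw [← P.pSum_append Q]
  exact (P.append Q).pSum_le_pVar

lemma pVar_mono_right (hst : s ≤ t) (htt' : t ≤ t') : pVar p x s t ≤ pVar p x s t' :=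
  le_self_add.trans (pVar_add_pVar_le hst htt')

lemma pVar_anti_left (hs's : s' ≤ s) (hst : s ≤ t) : pVar p x s t ≤ pVar p x s' t :=
  le_add_self.trans (pVar_add_pVar_le hs's hst)

lemma edist_rpow_le_pVar (hp : 0 < p) (hst : s ≤ t) : edist (x s) (x t) ^ p ≤ pVar p x s t := by
  rcases hst.eq_or_lt with rfl | hst
  · simp [ENNReal.zero_rpow_of_pos hp]
  · simpa [pSum, IntervalPartition.single] using
      (IntervalPartition.single hst).pSum_le_pVar (p := p) (x := x)

lemma pSum_le_pVar_of_le_succ (hp : 0 < p) {n : ℕ} {u : ℕ → ℝ}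
    (hu : ∀ i < n, u i ≤ u (i + 1)) : pSum p x n u ≤ pVar p x (u 0) (u n) := by
  induction n with
  | zero => simp [pSum]
  | succ n ih =>
    rw [pSum, sum_range_succ]
    calc _ ≤ pVar p x (u 0) (u n) + pVar p x (u n) (u (n + 1)) :=
          add_le_add (ih fun i hi => hu i (by omega)) (edist_rpow_le_pVar hp (hu n n.lt_succ_self))
      _ ≤ pVar p x (u 0) (u (n + 1)) :=
          pVar_add_pVar_le (monotoneOn_Iic_of_le_succ hu (by simp) (by simp) (by omega))
            (hu n n.lt_succ_self)

variable (x) in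
lemma edist_le_edist_min_add_edist_max {a b : ℝ} (hab : a ≤ b) (m : ℝ) :
    edist (x a) (x b) ≤
      edist (x (min a m)) (x (min b m)) + edist (x (max a m)) (x (max b m)) := by
  rcases le_total b m with hbm | hmb
  · simp [hbm, hab.trans hbm]
  rcases le_total m a with hma | ham
  · simp [hma, hma.trans hab]
  · rw [min_eq_left ham, min_eq_right hmb, max_eq_right ham, max_eq_left hmb]
    exact edist_triangle _ _ _

/-- Clamping a partition of `[s, t]` at `m` from above and from below gives chains in `[s, m]`
and `[m, t]` whose increments add up to at least the original ones; then apply Minkowski. -/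
lemma pVar_rpow_le_add (hp : 1 ≤ p) (hsm : s ≤ m) (hmt : m ≤ t) :
    pVar p x s t ^ (1 / p) ≤ pVar p x s m ^ (1 / p) + pVar p x m t ^ (1 / p) := by
  have hp0 : 0 < p := by linarith
  have hp' : 0 < 1 / p := by positivity
  rw [one_div, ENNReal.rpow_inv_le_iff hp0, pVar_eq_iSup]
  refine iSup_le fun P => ?_
  rw [← ENNReal.rpow_inv_le_iff hp0, ← one_div]
  have hlow : pSum p x P.n (fun i => min (P.u i) m) ≤ pVar p x s m := by
    simpa [P.u_zero, P.u_n, hsm, hmt] using pSum_le_pVar_of_le_succ (x := x) hp0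
      (u := fun i => min (P.u i) m) fun i hi => min_le_min_right m (P.lt_succ i hi).le
  have hhigh : pSum p x P.n (fun i => max (P.u i) m) ≤ pVar p x m t := by
    simpa [P.u_zero, P.u_n, hsm, hmt] using pSum_le_pVar_of_le_succ (x := x) hp0
      (u := fun i => max (P.u i) m) fun i hi => max_le_max_right m (P.lt_succ i hi).le
  calc pSum p x P.n P.u ^ (1 / p)
      ≤ (∑ i ∈ range P.n, (edist (x (min (P.u i) m)) (x (min (P.u (i + 1)) m)) +
          edist (x (max (P.u i) m)) (x (max (P.u (i + 1)) m))) ^ p) ^ (1 / p) := by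
        refine ENNReal.rpow_le_rpow (sum_le_sum fun i hi => ?_) hp'.le
        exact ENNReal.rpow_le_rpow (edist_le_edist_min_add_edist_max x
          (P.lt_succ i (mem_range.1 hi)).le m) hp0.le
    _ ≤ pSum p x P.n (fun i => min (P.u i) m) ^ (1 / p) +
          pSum p x P.n (fun i => max (P.u i) m) ^ (1 / p) := ENNReal.Lp_add_le _ _ _ hp
    _ ≤ pVar p x s m ^ (1 / p) + pVar p x m t ^ (1 / p) :=
        add_le_add (ENNReal.rpow_le_rpow hlow hp'.le) (ENNReal.rpow_le_rpow hhigh hp'.le)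

lemma pVar_rpow_le_sum (hp : 1 ≤ p) {n : ℕ} {u : ℕ → ℝ} (hu : ∀ i < n, u i ≤ u (i + 1)) :
    pVar p x (u 0) (u n) ^ (1 / p) ≤ ∑ i ∈ range n, pVar p x (u i) (u (i + 1)) ^ (1 / p) := by
  induction n with
  | zero => simpa using zero_lt_one.trans_le hp
  | succ n ih =>
    rw [sum_range_succ]
    exact (pVar_rpow_le_add hp (monotoneOn_Iic_of_le_succ hu (by simp) (by simp) (by omega))
      (hu n n.lt_succ_self)).trans (add_le_add_left (ih fun i hi => hu i (by omega)) _)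

lemma pVar_le_rpow_mul_sum (hp : 1 ≤ p) {n : ℕ} {u : ℕ → ℝ} (hu : ∀ i < n, u i ≤ u (i + 1)) :
    pVar p x (u 0) (u n) ≤
      (n : ℝ≥0∞) ^ (p - 1) * ∑ i ∈ range n, pVar p x (u i) (u (i + 1)) := by
  have hp0 : 0 < p := by linarith
  calc pVar p x (u 0) (u n) = (pVar p x (u 0) (u n) ^ (1 / p)) ^ p := by
        rw [← ENNReal.rpow_mul, one_div_mul_cancel hp0.ne', ENNReal.rpow_one]
    _ ≤ (∑ i ∈ range n, pVar p x (u i) (u (i + 1)) ^ (1 / p)) ^ p :=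
        ENNReal.rpow_le_rpow (pVar_rpow_le_sum hp hu) hp0.le
    _ ≤ (n : ℝ≥0∞) ^ (p - 1) *
          ∑ i ∈ range n, (pVar p x (u i) (u (i + 1)) ^ (1 / p)) ^ p := by
        simpa using ENNReal.rpow_sum_le_const_mul_sum_rpow (range n) _ hp
    _ = (n : ℝ≥0∞) ^ (p - 1) * ∑ i ∈ range n, pVar p x (u i) (u (i + 1)) := by
        simp_rw [← ENNReal.rpow_mul, one_div_mul_cancel hp0.ne', ENNReal.rpow_one]

lemma exists_lt_pVar_shrink_right (hx : ContinuousWithinAt x (Icc s t) t) {C : ℝ≥0∞}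
    (h : C < pVar p x s t) : ∃ r ∈ Ioo s t, C < pVar p x s r := by
  obtain ⟨⟨_ | n, u, hu, hu0, hun⟩, hP⟩ := exists_lt_pSum_of_lt_pVar h
  · simp [pSum] at hP
  set S := ∑ i ∈ range n, edist (x (u i)) (x (u (i + 1))) ^ p
  have hsum : ∀ r, pSum p x (n + 1) (Function.update u (n + 1) r) =
      S + edist (x (u n)) (x r) ^ p := fun r => by
    rw [pSum, sum_range_succ, Function.update_self, Function.update_of_ne n.succ_ne_self.symm]
    refine congrArg (· + _) (sum_congr rfl fun i hi => ?_)
    have hi := mem_range.1 hi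
    rw [Function.update_of_ne (by omega), Function.update_of_ne (by omega)]
  have hlast : u n < t := hun ▸ hu n n.lt_succ_self
  have hx' : Tendsto x (𝓝[<] t) (𝓝 (x t)) :=
    hx.mono_of_mem_nhdsWithin (Icc_mem_nhdsLT (lt_of_lt_pVar h))
  have hP' : C < S + edist (x (u n)) (x t) ^ p := by
    rwa [← hun, ← hsum, Function.update_eq_self]
  have hlim : Tendsto (fun r => S + edist (x (u n)) (x r) ^ p) (𝓝[<] t)
      (𝓝 (S + edist (x (u n)) (x t) ^ p)) := ((ENNReal.continuous_rpow_const.tendsto _).comp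
      (tendsto_const_nhds.edist hx')).const_add S
  obtain ⟨r, hCr, hr⟩ :=
    ((hlim.eventually (lt_mem_nhds hP')).and (Ioo_mem_nhdsLT hlast)).exists
  let Q : IntervalPartition s r :=
    { n := n + 1
      u := Function.update u (n + 1) r
      lt_succ := fun i hi => by
        rcases (Nat.lt_succ_iff.1 hi).lt_or_eq with hi | rfl
        · rw [Function.update_of_ne (by omega), Function.update_of_ne (by omega)]
          exact hu i (by omega)
        · simpa using hr.1
      u_zero := by rw [Function.update_of_ne n.succ_ne_zero.symm, hu0]
      u_n := Function.update_self .. }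
  have hsn : s ≤ u n := hu0 ▸ monotoneOn_Iic_of_le_succ (fun i hi => (hu i hi).le)
    (Set.mem_Iic.2 (Nat.zero_le _)) (Set.mem_Iic.2 n.le_succ) (Nat.zero_le n)
  exact ⟨r, ⟨hsn.trans_lt hr.1, hr.2⟩, hCr.trans_le ((hsum r).symm.trans_le Q.pSum_le_pVar)⟩

lemma exists_lt_pVar_shrink_left (hx : ContinuousWithinAt x (Icc s t) s) {C : ℝ≥0∞}
    (h : C < pVar p x s t) : ∃ v ∈ Ioo s t, C < pVar p x v t := by
  obtain ⟨⟨_ | n, u, hu, hu0, hun⟩, hP⟩ := exists_lt_pSum_of_lt_pVar h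
  · simp [pSum] at hP
  set S := ∑ i ∈ range n, edist (x (u (i + 1))) (x (u (i + 1 + 1))) ^ p
  have hsum : ∀ v, pSum p x (n + 1) (Function.update u 0 v) =
      S + edist (x v) (x (u 1)) ^ p := fun v => by
    rw [pSum, sum_range_succ', Function.update_self, zero_add,
      Function.update_of_ne one_ne_zero]
    refine congrArg (· + _) (sum_congr rfl fun i _ => ?_)
    rw [Function.update_of_ne i.succ_ne_zero, Function.update_of_ne (i + 1).succ_ne_zero]
  have hfirst : s < u 1 := hu0 ▸ hu 0 n.succ_pos
  have hx' : Tendsto x (𝓝[>] s) (𝓝 (x s)) :=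
    hx.mono_of_mem_nhdsWithin (Icc_mem_nhdsGT (lt_of_lt_pVar h))
  have hP' : C < S + edist (x s) (x (u 1)) ^ p := by
    rwa [← hu0, ← hsum, Function.update_eq_self]
  have hlim : Tendsto (fun v => S + edist (x v) (x (u 1)) ^ p) (𝓝[>] s)
      (𝓝 (S + edist (x s) (x (u 1)) ^ p)) := ((ENNReal.continuous_rpow_const.tendsto _).comp
      (hx'.edist tendsto_const_nhds)).const_add S
  obtain ⟨v, hCv, hv⟩ :=
    ((hlim.eventually (lt_mem_nhds hP')).and (Ioo_mem_nhdsGT hfirst)).exists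
  let Q : IntervalPartition v t :=
    { n := n + 1
      u := Function.update u 0 v
      lt_succ := fun i hi => by
        rcases i with _ | i
        · simpa using hv.2
        · rw [Function.update_of_ne i.succ_ne_zero, Function.update_of_ne (i + 1).succ_ne_zero]
          exact hu (i + 1) hi
      u_zero := Function.update_self ..
      u_n := by rw [Function.update_of_ne n.succ_ne_zero, hun] }
  have h1t : u 1 ≤ t := hun ▸ monotoneOn_Iic_of_le_succ (fun i hi => (hu i hi).le)
    (Set.mem_Iic.2 (by omega)) (Set.mem_Iic.2 le_rfl) (by omega)
  exact ⟨v, ⟨hv.1, hv.2.trans_le h1t⟩, hCv.trans_le ((hsum v).symm.trans_le Q.pSum_le_pVar)⟩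

/-- If `ε ≤ pVar p x s r` for all `r ∈ (s, t]`, superadditivity gives
`pVar p x v t ≤ pVar p x s t - ε` for all `v ∈ (s, t)`, contradicting
`exists_lt_pVar_shrink_left`. -/
lemma tendsto_pVar_nhdsGT_zero (hx : ContinuousWithinAt x (Icc s t) s) (hst : s < t)
    (hfin : pVar p x s t ≠ ∞) : Tendsto (pVar p x s) (𝓝[>] s) (𝓝 0) := by
  rw [ENNReal.tendsto_nhds_zero]
  intro ε hε
  obtain ⟨r, hr, hrε⟩ : ∃ r ∈ Ioc s t, pVar p x s r ≤ ε := by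
    by_contra! h
    have hεt : ε < pVar p x s t := h t ⟨hst, le_rfl⟩
    obtain ⟨v, hv, hlt⟩ := exists_lt_pVar_shrink_left hx
      (ENNReal.sub_lt_self hfin (zero_le.trans_lt hεt).ne' hε.ne')
    have hsplit : ε + pVar p x v t ≤ pVar p x s t :=
      (add_le_add_left (h v ⟨hv.1, hv.2.le⟩).le _).trans (pVar_add_pVar_le hv.1.le hv.2.le)
    exact hlt.not_ge (ENNReal.le_sub_of_add_le_left hεt.ne_top hsplit)
  filter_upwards [Ioo_mem_nhdsGT hr.1] with r' hr'
  exact (pVar_mono_right hr'.1.le hr'.2.le).trans hrε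

lemma tendsto_pVar_nhdsGT (hp : 1 ≤ p) (hx : ContinuousWithinAt x (Icc m t) m) (hmt : m < t)
    (hfin : pVar p x m t ≠ ∞) (hsm : s ≤ m) :
    Tendsto (pVar p x s) (𝓝[>] m) (𝓝 (pVar p x s m)) := by
  have hp0 : 0 < p := by linarith
  have hbound : Tendsto (fun r => (pVar p x s m ^ (1 / p) + pVar p x m r ^ (1 / p)) ^ p)
      (𝓝[>] m) (𝓝 (pVar p x s m)) := by
    have hcont : Continuous fun y : ℝ≥0∞ => (pVar p x s m ^ (1 / p) + y ^ (1 / p)) ^ p :=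
      ENNReal.continuous_rpow_const.comp
        (continuous_const.add ENNReal.continuous_rpow_const)
    simpa [Function.comp_def, hp0, ← ENNReal.rpow_mul, hp0.ne'] using
      (hcont.tendsto 0).comp (tendsto_pVar_nhdsGT_zero hx hmt hfin)
  refine tendsto_of_tendsto_of_tendsto_of_le_of_le' tendsto_const_nhds hbound ?_ ?_
  · filter_upwards [self_mem_nhdsWithin] with r hr using pVar_mono_right hsm (le_of_lt hr)
  · filter_upwards [self_mem_nhdsWithin] with r hr
    rw [← ENNReal.rpow_inv_le_iff hp0, ← one_div]
    exact pVar_rpow_le_add hp hsm (le_of_lt hr)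

lemma exists_pVar_eq (hp : 1 ≤ p) (hx : ContinuousOn x (Icc s t)) (hfin : pVar p x s t ≠ ∞)
    {α : ℝ≥0∞} (hα : 0 < α) (hαt : α < pVar p x s t) :
    ∃ r ∈ Ioo s t, pVar p x s r = α := by
  set S := {r ∈ Icc s t | pVar p x s r ≤ α}
  have hsS : s ∈ S := ⟨⟨le_rfl, (lt_of_lt_pVar hαt).le⟩, by simp⟩
  have hbdd : BddAbove S := ⟨t, fun r hr => hr.1.2⟩
  set τ := sSup S
  have hsτ : s ≤ τ := le_csSup hbdd hsS
  have hτt : τ ≤ t := csSup_le ⟨s, hsS⟩ fun r hr => hr.1.2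
  have hle : pVar p x s τ ≤ α := by
    by_contra! h
    obtain ⟨r, hr, hαr⟩ := exists_lt_pVar_shrink_right
      ((hx τ ⟨hsτ, hτt⟩).mono (Icc_subset_Icc_right hτt)) h
    obtain ⟨r', hr', hrr'⟩ := exists_lt_of_lt_csSup ⟨s, hsS⟩ hr.2
    exact hαr.not_ge ((pVar_mono_right hr.1.le hrr'.le).trans hr'.2)
  have hτt' : τ < t := hτt.lt_of_ne fun h => by rw [h] at hle; exact hle.not_gt hαt
  have hge : α ≤ pVar p x s τ := by
    by_contra! h
    have hlim := tendsto_pVar_nhdsGT hp ((hx τ ⟨hsτ, hτt⟩).mono (Icc_subset_Icc_left hsτ))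
      hτt' (ne_top_of_le_ne_top hfin (pVar_anti_left hsτ hτt)) hsτ
    obtain ⟨r, hrα, hr⟩ :=
      ((hlim.eventually (gt_mem_nhds h)).and (Ioc_mem_nhdsGT hτt')).exists
    exact hr.1.not_ge (le_csSup hbdd ⟨⟨hsτ.trans hr.1.le, hr.2⟩, hrα.le⟩)
  refine ⟨τ, ⟨hsτ.lt_of_ne fun h => ?_, hτt'⟩, hle.antisymm hge⟩
  rw [← h, pVar_self] at hge
  exact hα.not_ge hge

/-- Induction on `n` with `pVar p x s t < n * α`, cutting off a first piece on which the
`p`-variation is exactly `α` (`exists_pVar_eq`). -/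
lemma exists_partition_pVar_le_eq (hp : 1 ≤ p) (hx : ContinuousOn x (Icc s t))
    (hfin : pVar p x s t ≠ ∞) {α : ℝ≥0∞} (hα : 0 < α) (hst : s < t) :
    ∃ P : IntervalPartition s t, (∀ i < P.n, pVar p x (P.u i) (P.u (i + 1)) ≤ α) ∧
      ∀ i, i + 1 < P.n → pVar p x (P.u i) (P.u (i + 1)) = α := by
  obtain ⟨n, hn⟩ := ENNReal.exists_nat_mul_gt hα.ne' hfin
  induction n generalizing s with
  | zero => simp at hn
  | succ n ih =>
    by_cases hsmall : pVar p x s t ≤ α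
    · refine ⟨.single hst, fun i hi => ?_,
        fun i hi => absurd hi (by simp [IntervalPartition.single])⟩
      obtain rfl : i = 0 := by simpa [IntervalPartition.single] using hi
      simpa [IntervalPartition.single] using hsmall
    have hαt := not_le.1 hsmall
    obtain ⟨r, hr, hsr⟩ := exists_pVar_eq hp hx hfin hα hαt
    have hsplit : α + pVar p x r t ≤ pVar p x s t := hsr ▸ pVar_add_pVar_le hr.1.le hr.2.le
    have hrt : pVar p x r t < n * α := by
      rw [Nat.cast_succ, add_one_mul, add_comm] at hn
      exact (ENNReal.add_lt_add_iff_left hαt.ne_top).1 (hsplit.trans_lt hn)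
    obtain ⟨Q, hQle, hQeq⟩ := ih (hx.mono (Icc_subset_Icc_left hr.1.le))
      (ne_top_of_le_ne_top hfin (pVar_anti_left hr.1.le hr.2.le)) hr.2 hrt
    let R := (IntervalPartition.single hr.1).append Q
    have hRn : R.n = Q.n + 1 := add_comm 1 Q.n
    have hRu : ∀ k, R.u (k + 1) = Q.u k := fun k => by
      rw [add_comm]
      exact IntervalPartition.append_u_add _ Q k
    have hR0 : pVar p x (R.u 0) (R.u 1) = α := by rw [R.u_zero, hRu 0, Q.u_zero, hsr]
    refine ⟨R, fun i hi => ?_, fun i hi => ?_⟩ <;> rcases i with _ | k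
    · exact hR0.le
    · rw [hRu, hRu]
      exact hQle k (by omega)
    · exact hR0
    · rw [hRu, hRu]
      exact hQeq k (by omega)

end Variation

lemma IntervalPartition.sum_le_accumLocalVar {T : ℝ} (ω : ℝ → ℝ → ℝ≥0∞) {α : ℝ≥0∞}
    (P : IntervalPartition 0 T) (h : ∀ i < P.n, ω (P.u i) (P.u (i + 1)) ≤ α) :
    ∑ i ∈ range P.n, ω (P.u i) (P.u (i + 1)) ≤ accumLocalVar ω α T := by
  rw [← Fin.sum_univ_eq_sum_range (fun i => ω (P.u i) (P.u (i + 1)))]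
  exact le_iSup_of_le P.n <| le_iSup_of_le (fun i : Fin (P.n + 1) => P.u i) <|
    le_iSup_of_le P.strictMono_fin <| le_iSup_of_le P.u_zero <| le_iSup_of_le P.u_n <|
    le_iSup_of_le (fun i => h i i.isLt) le_rfl

/-- Either `N ≤ 1`, or `N ≤ 2 (N - 1) ≤ 2 M / a`. -/
lemma natCast_rpow_sub_one_mul_le {p : ℝ} (hp : 1 ≤ p) {N : ℕ} {S M a : ℝ≥0∞} (ha : a ≠ 0)
    (ha' : a ≠ ∞) (hSa : S ≤ N * a) (haS : (N - 1 : ℕ) * a ≤ S) (hSM : S ≤ M) :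
    (N : ℝ≥0∞) ^ (p - 1) * S ≤ 2 ^ (p - 1) * a * max 1 (a ^ (-p) * M ^ p) := by
  have hp1 : 0 ≤ p - 1 := by linarith
  rcases le_or_gt N 1 with hN | hN
  · have h2 : (1 : ℝ≥0∞) ≤ 2 ^ (p - 1) := by
      simpa using ENNReal.rpow_le_rpow_of_exponent_le (x := 2) one_le_two hp1
    have hN' : (N : ℝ≥0∞) ≤ 1 := by exact_mod_cast hN
    calc (N : ℝ≥0∞) ^ (p - 1) * S ≤ 1 * a * 1 := by
          rw [mul_one]
          exact mul_le_mul' (ENNReal.rpow_le_one hN' hp1) (hSa.trans (mul_le_of_le_one_left' hN'))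
      _ ≤ 2 ^ (p - 1) * a * max 1 (a ^ (-p) * M ^ p) :=
          mul_le_mul' (mul_le_mul' h2 le_rfl) (le_max_left _ _)
  set y := M / a
  have hNy : (N : ℝ≥0∞) ≤ 2 * y := by
    rw [← mul_div_assoc, ENNReal.le_div_iff_mul_le (Or.inl ha) (Or.inl ha')]
    calc (N : ℝ≥0∞) * a ≤ ((2 * (N - 1) : ℕ) : ℝ≥0∞) * a := by gcongr; omega
      _ = 2 * ((N - 1 : ℕ) * a) := by push_cast; ring
      _ ≤ 2 * M := by gcongr; exact haS.trans hSM
  have hy : a ^ (-p) * M ^ p = y ^ p := by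
    rw [ENNReal.div_rpow_of_nonneg _ _ (by linarith), div_eq_mul_inv, ENNReal.rpow_neg, mul_comm]
  calc (N : ℝ≥0∞) ^ (p - 1) * S ≤ (2 * y) ^ (p - 1) * (a * y) :=
        mul_le_mul' (ENNReal.rpow_le_rpow hNy hp1) (hSM.trans (ENNReal.mul_div_cancel ha ha').ge)
    _ = 2 ^ (p - 1) * a * (y ^ (p - 1) * y ^ (1 : ℝ)) := by
        rw [ENNReal.mul_rpow_of_nonneg _ _ hp1, ENNReal.rpow_one]; ring
    _ = 2 ^ (p - 1) * a * (a ^ (-p) * M ^ p) := by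
        rw [← ENNReal.rpow_add_of_nonneg _ _ hp1 zero_le_one, sub_add_cancel, hy]
    _ ≤ 2 ^ (p - 1) * a * max 1 (a ^ (-p) * M ^ p) := by gcongr; exact le_max_right _ _

theorem pVar_le_accumLocalVar_bound {E : Type*} [MetricSpace E] (p α T : ℝ)
    (hp : 1 ≤ p) (hα : 0 < α) (hT : 0 ≤ T) (x : ℝ → E)
    (hx : ContinuousOn x (Set.Icc 0 T)) (hfin : pVar p x 0 T < ∞) :
    pVar p x 0 T ≤
      (2 : ℝ≥0∞) ^ (p - 1) * ENNReal.ofReal α *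
        max 1 ((ENNReal.ofReal α) ^ (-p) *
          accumLocalVar (fun s t => pVar p x s t) (ENNReal.ofReal α) T ^ p) := by
  rcases hT.eq_or_lt with rfl | hT
  · simp
  have hα' : 0 < ENNReal.ofReal α := ENNReal.ofReal_pos.2 hα
  obtain ⟨P, hle, heq⟩ := exists_partition_pVar_le_eq hp hx hfin.ne hα' hT
  have hgrid : pVar p x 0 T ≤
      (P.n : ℝ≥0∞) ^ (p - 1) * ∑ i ∈ range P.n, pVar p x (P.u i) (P.u (i + 1)) := by
    simpa [P.u_zero, P.u_n] using
      pVar_le_rpow_mul_sum (x := x) hp fun i hi => (P.lt_succ i hi).le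
  refine hgrid.trans (natCast_rpow_sub_one_mul_le hp hα'.ne' ENNReal.ofReal_ne_top ?_ ?_
    (P.sum_le_accumLocalVar _ hle))
  · simpa using sum_le_card_nsmul _ _ _ fun i hi => hle i (mem_range.1 hi)
  · calc ((P.n - 1 : ℕ) : ℝ≥0∞) * ENNReal.ofReal α
        = ∑ i ∈ range (P.n - 1), pVar p x (P.u i) (P.u (i + 1)) := by
          rw [sum_congr rfl fun i hi => heq i (by have := mem_range.1 hi; omega)]
          simp
      _ ≤ _ := sum_le_sum_of_subset (range_subset_range.2 (Nat.sub_le _ _))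
end

section
/- Let ω be a control on [0,T] and α > 0. If N := N_{α,[0,T]}(ω) is finite, then N ≤ α^{−1} · M_{α,[0,T]}(ω). -/
/-!
Let `σ₀ < σ₁ < ⋯ < σ_N < σ_{N+1} = T` be the greedy points. On `(σ_i, σ_{i+1})` the function
`ω (σ_i, ·)` stays below `α`, so by continuity `ω (σ_i, σ_{i+1}) ≤ α` and the greedy points form
an admissible partition for `M_α`. For `i < N` the infimum defining `σ_{i+1}` lies in the closed
set `{t | ω (σ_i, t) ≥ α}`, so `ω (σ_i, σ_{i+1}) ≥ α`. Summing, `N α ≤ M_α`.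
The points cannot stall below `T`: `σ_{i+1}` depends only on `σ_i`, so a repeated point would
repeat forever and `N` would be infinite.
-/

open scoped ENNReal

open Set Finset

open scoped Classical in
noncomputable def greedyNext (ω : ℝ → ℝ → ℝ≥0∞) (α : ℝ≥0∞) (T s : ℝ) : ℝ :=
  if ∃ t ∈ Ioc s T, α ≤ ω s t then sInf {t | t ∈ Ioc s T ∧ α ≤ ω s t} else T

section GreedyNext

variable {ω : ℝ → ℝ → ℝ≥0∞} {α : ℝ≥0∞} {T s t : ℝ}

theorem greedyNext_le : greedyNext ω α T s ≤ T := by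
  unfold greedyNext
  split_ifs with h
  · obtain ⟨t, ht, hωt⟩ := h
    exact le_trans (csInf_le ⟨s, fun _ hx => hx.1.1.le⟩ ⟨ht, hωt⟩) ht.2
  · exact le_rfl

theorem le_greedyNext (hs : s ≤ T) : s ≤ greedyNext ω α T s := by
  unfold greedyNext
  split_ifs with h
  · obtain ⟨t, ht⟩ := h
    exact le_csInf ⟨t, ht⟩ fun _ hx => hx.1.1.le
  · exact hs

theorem lt_of_lt_greedyNext (hst : s < t) (ht : t < greedyNext ω α T s) : ω s t < α := by
  by_contra! hαt
  have hmem : t ∈ Ioc s T ∧ α ≤ ω s t := ⟨⟨hst, ht.le.trans greedyNext_le⟩, hαt⟩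
  have : greedyNext ω α T s ≤ t := by
    rw [greedyNext, if_pos ⟨t, hmem⟩]
    exact csInf_le ⟨s, fun _ hx => hx.1.1.le⟩ hmem
  exact this.not_gt ht

theorem le_apply_greedyNext (hc : ContinuousOn (ω s) (Icc s T)) (h : greedyNext ω α T s < T) :
    α ≤ ω s (greedyNext ω α T s) := by
  unfold greedyNext at h ⊢
  split_ifs at h ⊢ with hex
  · obtain ⟨t, ht⟩ := hex
    have hclosed : IsClosed (Icc s T ∩ ω s ⁻¹' Ici α) :=
      hc.preimage_isClosed_of_isClosed isClosed_Icc isClosed_Ici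
    have hsub : {t | t ∈ Ioc s T ∧ α ≤ ω s t} ⊆ Icc s T ∩ ω s ⁻¹' Ici α :=
      fun _ hx => ⟨Ioc_subset_Icc_self hx.1, hx.2⟩
    exact (hclosed.closure_subset_iff.2 hsub
      (csInf_mem_closure ⟨t, ht⟩ ⟨s, fun _ hx => hx.1.1.le⟩)).2
  · exact absurd h (lt_irrefl T)

theorem apply_greedyNext_le (hc : ContinuousOn (ω s) (Icc s T)) (h : s < greedyNext ω α T s) :
    ω s (greedyNext ω α T s) ≤ α := by
  set n := greedyNext ω α T s
  have hclosed : IsClosed (Icc s T ∩ ω s ⁻¹' Iic α) :=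
    hc.preimage_isClosed_of_isClosed isClosed_Icc isClosed_Iic
  have hsub : Ioo s n ⊆ Icc s T ∩ ω s ⁻¹' Iic α :=
    fun t ht => ⟨⟨ht.1.le, ht.2.le.trans greedyNext_le⟩, (lt_of_lt_greedyNext ht.1 ht.2).le⟩
  have hn : n ∈ closure (Ioo s n) := by
    rw [closure_Ioo h.ne]
    exact right_mem_Icc.2 h.le
  exact (hclosed.closure_subset_iff.2 hsub hn).2

end GreedyNext

section GreedyPoints

variable {ω : ℝ → ℝ → ℝ≥0∞} {α : ℝ≥0∞} {T : ℝ}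

theorem greedyPoints_succ (n : ℕ) :
    greedyPoints ω α T (n + 1) = greedyNext ω α T (greedyPoints ω α T n) :=
  rfl

theorem greedyPoints_mem_Icc (hT : 0 ≤ T) (n : ℕ) : greedyPoints ω α T n ∈ Icc 0 T := by
  induction n with
  | zero => exact ⟨le_rfl, hT⟩
  | succ n ih =>
    rw [greedyPoints_succ]
    exact ⟨ih.1.trans (le_greedyNext ih.2), greedyNext_le⟩

theorem greedyPoints_monotone (hT : 0 ≤ T) : Monotone (greedyPoints ω α T) :=
  monotone_nat_of_le_succ fun n => le_greedyNext (greedyPoints_mem_Icc hT n).2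

theorem greedyPoints_add_of_succ_eq {n : ℕ}
    (h : greedyPoints ω α T (n + 1) = greedyPoints ω α T n) (k : ℕ) :
    greedyPoints ω α T (n + k) = greedyPoints ω α T n := by
  induction k with
  | zero => rfl
  | succ k ih => rw [← add_assoc, greedyPoints_succ, ih, ← greedyPoints_succ, h]

theorem greedyPoints_lt_succ (hT : 0 ≤ T) (hbdd : BddAbove {n | greedyPoints ω α T n < T})
    {n : ℕ} (hn : greedyPoints ω α T n < T) :
    greedyPoints ω α T n < greedyPoints ω α T (n + 1) := by
  refine (greedyPoints_monotone hT n.le_succ).lt_of_ne fun h => ?_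
  obtain ⟨b, hb⟩ := hbdd
  have : n + (b + 1) ≤ b :=
    hb (show greedyPoints ω α T (n + (b + 1)) < T by rwa [greedyPoints_add_of_succ_eq h.symm])
  omega

end GreedyPoints

theorem sum_range_le_accumLocalVar {ω : ℝ → ℝ → ℝ≥0∞} {α : ℝ≥0∞} {T : ℝ} {σ : ℕ → ℝ} {n : ℕ}
    (hσ : ∀ i < n, σ i < σ (i + 1)) (h0 : σ 0 = 0) (hn : σ n = T)
    (hloc : ∀ i < n, ω (σ i) (σ (i + 1)) ≤ α) :
    ∑ i ∈ range n, ω (σ i) (σ (i + 1)) ≤ accumLocalVar ω α T := by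
  let u : Fin (n + 1) → ℝ := fun i => σ i
  have hu : StrictMono u := Fin.strictMono_iff_lt_succ.2 fun i => hσ i i.isLt
  have hsum : ∑ i : Fin n, ω (u i.castSucc) (u i.succ) = ∑ i ∈ range n, ω (σ i) (σ (i + 1)) :=
    Fin.sum_univ_eq_sum_range (fun i => ω (σ i) (σ (i + 1))) n
  rw [← hsum]
  exact le_iSup_of_le n <| le_iSup_of_le u <| le_iSup_of_le hu <| le_iSup_of_le h0 <|
    le_iSup_of_le hn <| le_iSup_of_le (fun i => hloc i i.isLt) le_rfl

theorem greedy_count_mul_le_accumLocalVar {ω : ℝ → ℝ → ℝ≥0∞} {α : ℝ≥0∞} {T : ℝ} (hT : 0 ≤ T)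
    (hcont : ∀ s ∈ Icc 0 T, ContinuousOn (ω s) (Icc s T))
    (hbdd : BddAbove {n | greedyPoints ω α T n < T}) :
    (sSup {n | greedyPoints ω α T n < T} : ℕ) * α ≤ accumLocalVar ω α T := by
  set σ := greedyPoints ω α T
  set N := sSup {n | σ n < T}
  rcases N.eq_zero_or_pos with hN | hN
  · simp [hN]
  have hσN : σ N < T := Nat.sSup_mem (by by_contra! h; simp [N, h] at hN) hbdd
  have hlt : ∀ i ≤ N, σ i < T := fun i hi => (greedyPoints_monotone hT hi).trans_lt hσN
  have hlast : σ (N + 1) = T := (greedyPoints_mem_Icc hT _).2.antisymm <|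
    not_lt.1 fun h => (le_csSup hbdd h).not_gt N.lt_succ_self
  have hsec : ∀ i, ContinuousOn (ω (σ i)) (Icc (σ i) T) :=
    fun i => hcont _ (greedyPoints_mem_Icc hT i)
  have hstep : ∀ i < N + 1, σ i < σ (i + 1) :=
    fun i hi => greedyPoints_lt_succ hT hbdd (hlt i (by omega))
  calc (N : ℝ≥0∞) * α = ∑ _i ∈ range N, α := by simp
    _ ≤ ∑ i ∈ range N, ω (σ i) (σ (i + 1)) :=
      sum_le_sum fun i hi => le_apply_greedyNext (hsec i) (hlt (i + 1) (mem_range.1 hi))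
    _ ≤ ∑ i ∈ range (N + 1), ω (σ i) (σ (i + 1)) :=
      sum_le_sum_of_subset (range_subset_range.2 N.le_succ)
    _ ≤ accumLocalVar ω α T :=
      sum_range_le_accumLocalVar hstep rfl hlast fun i hi =>
        apply_greedyNext_le (hsec i) (hstep i hi)

theorem greedy_count_le_accumLocalVar_general (ω : ℝ → ℝ → ℝ≥0∞) (α T : ℝ)
    (hα : 0 < α) (hT : 0 ≤ T)
    (hcont : ContinuousOn (fun q : ℝ × ℝ => ω q.1 q.2)
      {q : ℝ × ℝ | 0 ≤ q.1 ∧ q.1 ≤ q.2 ∧ q.2 ≤ T})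
    (hbdd : BddAbove {n : ℕ | greedyPoints ω (ENNReal.ofReal α) T n < T}) :
    ((sSup {n : ℕ | greedyPoints ω (ENNReal.ofReal α) T n < T} : ℕ) : ℝ≥0∞) ≤
      (ENNReal.ofReal α)⁻¹ * accumLocalVar ω (ENNReal.ofReal α) T := by
  have hsec : ∀ s ∈ Icc 0 T, ContinuousOn (ω s) (Icc s T) := fun s hs =>
    hcont.comp (Continuous.prodMk_right s).continuousOn fun _ ht => ⟨hs.1, ht.1, ht.2⟩
  rw [mul_comm, ← div_eq_mul_inv, ENNReal.le_div_iff_mul_le (Or.inl (ENNReal.ofReal_pos.2 hα).ne')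
    (Or.inl ENNReal.ofReal_ne_top)]
  exact greedy_count_mul_le_accumLocalVar hT hsec hbdd

theorem greedy_count_le_accumLocalVar (ω : ℝ → ℝ → ℝ≥0∞) (α T : ℝ)
    (hα : 0 < α) (hT : 0 ≤ T)
    (hcont : ContinuousOn (fun q : ℝ × ℝ => ω q.1 q.2)
      {q : ℝ × ℝ | 0 ≤ q.1 ∧ q.1 ≤ q.2 ∧ q.2 ≤ T})
    (hdiag : ∀ t, 0 ≤ t → t ≤ T → ω t t = 0)
    (hsuper : ∀ s t u, 0 ≤ s → s ≤ t → t ≤ u → u ≤ T → ω s t + ω t u ≤ ω s u)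
    (hbdd : BddAbove {n : ℕ | greedyPoints ω (ENNReal.ofReal α) T n < T}) :
    ((sSup {n : ℕ | greedyPoints ω (ENNReal.ofReal α) T n < T} : ℕ) : ℝ≥0∞) ≤
      (ENNReal.ofReal α)⁻¹ * accumLocalVar ω (ENNReal.ofReal α) T :=
  greedy_count_le_accumLocalVar_general ω α T hα hT hcont hbdd
end
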